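/- For every natural number m ≥ 1 and every real x with 0 < x < 1, one has 0 < sin(πx) − Q_m(x) < (π^{2m+2} (x(1 − x))^{m+1} / (2m+2)!) · 1/(1 − q_m), where q_m := (π²/4)/((2m+4)(2m+3)). -/

import Mathlib

open Real

/-- The summand `a_{j,k} = (-π²/4)^k / (2j+2k)! · C(j+k, j)`. -/
noncomputable def a (j k : ℕ) : ℝ :=
  (-(π ^ 2) / 4) ^ k / (Nat.factorial (2 * j + 2 * k)) * (Nat.choose (j + k) j)

/-- `t_j = Σ_{k=0}^∞ a_{j,k}`. -/
noncomputable def t (j : ℕ) : ℝ := ∑' k : ℕ, a j k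

/-- `Q_m(x) = Σ_{j=1}^m t_j π^{2j} (x(1 − x))^j`. -/
noncomputable def Q (m : ℕ) (x : ℝ) : ℝ :=
  ∑ j ∈ Finset.Icc 1 m, t j * π ^ (2 * j) * (x * (1 - x)) ^ j

/-!
With `y = x (1 - x)` one has `(x - 1/2)² = 1/4 - y`, so
`sin (π x) = cos (π (x - 1/2)) = ∑ₙ π^(2n) (y - 1/4)ⁿ / (2n)!`. Expanding `(y - 1/4)ⁿ` binomially
and regrouping by powers of `y` (everything converges absolutely) gives
`sin (π x) = ∑ⱼ tⱼ π^(2j) yʲ`; at `x = 0` this shows `t₀ = 0`. For `j ≥ 1` the series defining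
`tⱼ` alternates with terms shrinking at least by half, so `0 < tⱼ < 1 / (2j)!`. Hence
`sin (π x) - Q m x` is the positive tail `∑_{j > m} tⱼ (π² y)ʲ`, whose terms lie below
`(π² y)ʲ / (2j)!`; as `π² y ≤ π² / 4`, these are dominated by a geometric series of ratio `q_m`.
-/

open Finset Nat

theorem tsum_alternating_pos_of_strictAnti {f : ℕ → ℝ} (hs : Summable fun k => (-1) ^ k * f k)
    (hf : StrictAnti f) : 0 < ∑' k, (-1) ^ k * f k := by
  set g : ℕ → ℝ := fun k => (-1) ^ k * f k
  have hpair (k : ℕ) : g (2 * k) + g (2 * k + 1) = f (2 * k) - f (2 * k + 1) := by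
    simp only [g, pow_succ, pow_mul]
    ring
  have he : Summable fun k => g (2 * k) := hs.comp_injective (mul_right_injective₀ two_ne_zero)
  have ho : Summable fun k => g (2 * k + 1) := hs.comp_injective fun m n h => by omega
  have hdrop (k : ℕ) : 0 < f (2 * k) - f (2 * k + 1) := sub_pos.2 (hf (lt_add_one _))
  rw [← tsum_even_add_odd he ho, ← he.tsum_add ho, tsum_congr hpair]
  exact ((he.add ho).congr hpair).tsum_pos (fun k => (hdrop k).le) 0 (hdrop 0)

theorem tsum_alternating_lt_of_strictAnti {f : ℕ → ℝ} (hs : Summable fun k => (-1) ^ k * f k)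
    (hf : StrictAnti f) : ∑' k, (-1) ^ k * f k < f 0 := by
  have hs' : Summable fun k => (-1) ^ k * f (k + 1) := by
    simpa [pow_succ] using (hs.comp_injective (add_left_injective 1)).neg
  have := tsum_alternating_pos_of_strictAnti hs' (hf.comp_strictMono (strictMono_id.add_const 1))
  rw [hs.tsum_eq_zero_add]
  simp only [pow_succ, pow_zero, one_mul, mul_neg_one, neg_mul, tsum_neg]
  linarith

theorem pow_div_factorial_two_mul_succ (z : ℝ) (k : ℕ) :
    z ^ (k + 1) / (2 * (k + 1))! = z ^ k / (2 * k)! * (z / ((2 * k + 1) * (2 * k + 2))) := by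
  rw [show 2 * (k + 1) = 2 * k + 1 + 1 by ring, factorial_succ, factorial_succ]
  push_cast
  field_simp
  ring

theorem pow_div_factorial_two_mul_add_le {z : ℝ} (hz : 0 ≤ z) (n i : ℕ) :
    z ^ (n + i) / (2 * (n + i))! ≤ z ^ n / (2 * n)! * (z / ((2 * n + 1) * (2 * n + 2))) ^ i := by
  induction i with
  | zero => simp
  | succ i ih =>
    rw [← add_assoc, pow_div_factorial_two_mul_succ, pow_succ, ← mul_assoc]
    gcongr <;> omega

theorem summable_pow_div_factorial_two_mul (z : ℝ) : Summable fun n => z ^ n / (2 * n)! := by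
  refine (Real.summable_pow_div_factorial |z|).of_norm_bounded fun n => ?_
  rw [norm_div, norm_pow, Real.norm_eq_abs, RCLike.norm_natCast]
  gcongr
  omega

theorem sum_antidiagonal_choose_mul_pow_mul_pow (c : ℕ → ℝ) (y w : ℝ) (n : ℕ) :
    ∑ p ∈ antidiagonal n, c (p.1 + p.2) * (p.1 + p.2).choose p.1 * w ^ p.2 * y ^ p.1
      = c n * (y + w) ^ n := by
  rw [(Commute.all y w).add_pow', mul_sum]
  refine sum_congr rfl fun p hp => ?_
  rw [mem_antidiagonal.1 hp, nsmul_eq_mul]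
  ring

theorem hasSum_reexpand {c : ℕ → ℝ} {y w : ℝ}
    (hc : Summable fun n => |c n| * (|y| + |w|) ^ n) :
    HasSum (fun j => (∑' k, c (j + k) * (j + k).choose j * w ^ k) * y ^ j)
      (∑' n, c n * (y + w) ^ n) := by
  set g : ℕ × ℕ → ℝ := fun p => c (p.1 + p.2) * (p.1 + p.2).choose p.1 * w ^ p.2 * y ^ p.1
  let e := HasAntidiagonal.sigmaAntidiagonalEquivProd (A := ℕ)
  have hfiber (n : ℕ) : HasSum (fun p : antidiagonal n => g p) (c n * (y + w) ^ n) := by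
    rw [← sum_antidiagonal_choose_mul_pow_mul_pow]
    exact (antidiagonal n).hasSum g
  have hg : Summable g := by
    refine Summable.of_abs (e.summable_iff.1 ?_)
    refine (summable_sigma_of_nonneg fun _ => abs_nonneg _).2 ⟨fun n => .of_finite, ?_⟩
    refine hc.congr fun n => ?_
    rw [← sum_antidiagonal_choose_mul_pow_mul_pow (fun n => |c n|),
      ← (antidiagonal n).tsum_subtype]
    refine tsum_congr fun p => ?_
    simp [g, e, abs_mul, abs_pow]
  have hsum : HasSum g (∑' n, c n * (y + w) ^ n) := by
    rw [((e.hasSum_iff.2 hg.hasSum).sigma hfiber).tsum_eq]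
    exact hg.hasSum
  refine hsum.prod_fiberwise fun j => ?_
  rw [← tsum_mul_right]
  exact (hg.prod_factor j).hasSum

noncomputable def b (j k : ℕ) : ℝ := (π ^ 2 / 4) ^ k / (2 * j + 2 * k)! * (j + k).choose j

theorem a_eq_neg_one_pow_mul_b (j k : ℕ) : a j k = (-1) ^ k * b j k := by
  rw [a, b, neg_div, neg_pow]
  ring

theorem b_pos (j k : ℕ) : 0 < b j k := by
  have := choose_pos (le_add_right j k)
  unfold b
  positivity

theorem b_zero (j : ℕ) : b j 0 = 1 / (2 * j)! := by
  simp [b]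

theorem b_succ (j k : ℕ) : b j (k + 1) = b j k * (π ^ 2 / (8 * (k + 1) * (2 * j + 2 * k + 1))) := by
  have hchoose : ((j + (k + 1)).choose j : ℝ) * (k + 1) = (j + k).choose j * (j + k + 1) := by
    have := choose_mul_succ_eq (j + k) j
    rw [show j + k + 1 - j = k + 1 by omega] at this
    rw [← add_assoc]
    exact_mod_cast this.symm
  have hfact : ((2 * j + 2 * (k + 1))! : ℝ)
      = (2 * j + 2 * k + 1) * (2 * j + 2 * k + 2) * (2 * j + 2 * k)! := by
    rw [show 2 * j + 2 * (k + 1) = 2 * j + 2 * k + 1 + 1 by ring, factorial_succ, factorial_succ]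
    push_cast
    ring
  have hk : (k : ℝ) + 1 ≠ 0 := by positivity
  rw [b, b, hfact, eq_div_of_mul_eq hk hchoose]
  field_simp
  ring

theorem b_succ_le_half {j : ℕ} (hj : j ≠ 0) (k : ℕ) : b j (k + 1) ≤ b j k / 2 := by
  have hpi : π ^ 2 < 10 := by nlinarith [pi_lt_d2, pi_pos]
  have hden : (24 : ℝ) ≤ 8 * (k + 1) * (2 * j + 2 * k + 1) := by
    have : (1 : ℝ) ≤ j := by exact_mod_cast one_le_iff_ne_zero.2 hj
    nlinarith [(k.cast_nonneg : (0 : ℝ) ≤ k)]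
  rw [b_succ, div_eq_mul_one_div (b j k)]
  refine mul_le_mul_of_nonneg_left ?_ (b_pos j k).le
  rw [div_le_div_iff₀ (by linarith) two_pos]
  linarith

theorem strictAnti_b {j : ℕ} (hj : j ≠ 0) : StrictAnti (b j) :=
  strictAnti_nat_of_succ_lt fun k => (b_succ_le_half hj k).trans_lt (half_lt_self (b_pos j k))

theorem summable_neg_one_pow_mul_b {j : ℕ} (hj : j ≠ 0) :
    Summable fun k => (-1) ^ k * b j k := by
  have hnorm (k : ℕ) : ‖(-1) ^ k * b j k‖ = b j k := by
    rw [norm_mul, norm_pow, norm_neg, norm_one, one_pow, one_mul,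
      Real.norm_of_nonneg (b_pos j k).le]
  refine summable_of_ratio_norm_eventually_le (r := 1 / 2) (by norm_num) (.of_forall fun k => ?_)
  rw [hnorm, hnorm]
  linarith [b_succ_le_half hj k]

theorem t_eq_tsum_neg_one_pow_mul_b (j : ℕ) : t j = ∑' k, (-1) ^ k * b j k :=
  tsum_congr (a_eq_neg_one_pow_mul_b j)

theorem t_pos {j : ℕ} (hj : j ≠ 0) : 0 < t j := by
  rw [t_eq_tsum_neg_one_pow_mul_b]
  exact tsum_alternating_pos_of_strictAnti (summable_neg_one_pow_mul_b hj) (strictAnti_b hj)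

theorem t_lt {j : ℕ} (hj : j ≠ 0) : t j < 1 / (2 * j)! := by
  rw [t_eq_tsum_neg_one_pow_mul_b, ← b_zero]
  exact tsum_alternating_lt_of_strictAnti (summable_neg_one_pow_mul_b hj) (strictAnti_b hj)

theorem hasSum_sin_pi_mul (x : ℝ) :
    HasSum (fun j => t j * π ^ (2 * j) * (x * (1 - x)) ^ j) (sin (π * x)) := by
  set c : ℕ → ℝ := fun n => π ^ (2 * n) / (2 * n)!
  have hc : Summable fun n => |c n| * (|x * (1 - x)| + |-(1 / 4 : ℝ)|) ^ n := by
    refine (summable_pow_div_factorial_two_mul (π ^ 2 * (|x * (1 - x)| + |-(1 / 4 : ℝ)|))).congr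
      fun n => ?_
    dsimp only [c]
    rw [abs_of_nonneg (by positivity : (0 : ℝ) ≤ π ^ (2 * n) / (2 * n)!), mul_pow, ← pow_mul]
    ring
  have hinner (j : ℕ) :
      ∑' k, c (j + k) * (j + k).choose j * (-(1 / 4 : ℝ)) ^ k = π ^ (2 * j) * t j := by
    rw [t, ← tsum_mul_left]
    refine tsum_congr fun k => ?_
    dsimp only [c]
    rw [a, mul_add 2 j k]
    ring
  have hcos : ∑' n, c n * (x * (1 - x) + -(1 / 4)) ^ n = sin (π * x) := by
    rw [← cos_pi_div_two_sub, show π / 2 - π * x = -(π * (x - 1 / 2)) by ring, cos_neg,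
      cos_eq_tsum]
    refine tsum_congr fun n => ?_
    dsimp only [c]
    rw [show x * (1 - x) + -(1 / 4) = -(x - 1 / 2) ^ 2 by ring, neg_pow, mul_pow, ← pow_mul]
    ring
  have h := hasSum_reexpand hc
  simp only [hinner, hcos] at h
  convert h using 2 with j
  ring

theorem t_zero : t 0 = 0 := by
  have h := (hasSum_sin_pi_mul 0).unique (hasSum_single 0 fun j hj => by simp [hj])
  simpa using h.symm

theorem hasSum_sin_pi_mul_sub_Q (m : ℕ) (x : ℝ) :
    HasSum (fun i => t (i + (m + 1)) * π ^ (2 * (i + (m + 1))) * (x * (1 - x)) ^ (i + (m + 1)))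
      (sin (π * x) - Q m x) := by
  have hQ : Q m x = ∑ j ∈ range (m + 1), t j * π ^ (2 * j) * (x * (1 - x)) ^ j := by
    rw [Q, ← Ico_add_one_right_eq_Icc, range_eq_Ico, sum_eq_sum_Ico_succ_bot (succ_pos m), t_zero,
      zero_mul, zero_mul, zero_add]
    rfl
  rw [hQ]
  exact (hasSum_nat_add_iff' (m + 1)).2 (hasSum_sin_pi_mul x)

theorem t_mul_pow_pos {j : ℕ} (hj : j ≠ 0) {y : ℝ} (hy : 0 < y) : 0 < t j * π ^ (2 * j) * y ^ j :=
  mul_pos (mul_pos (t_pos hj) (by positivity)) (pow_pos hy j)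

theorem t_mul_pow_lt {j : ℕ} (hj : j ≠ 0) {y : ℝ} (hy : 0 < y) :
    t j * π ^ (2 * j) * y ^ j < (π ^ 2 * y) ^ j / (2 * j)! := by
  rw [mul_assoc, mul_pow, ← pow_mul, ← one_div_mul_eq_div]
  exact mul_lt_mul_of_pos_right (t_lt hj) (by positivity)

theorem t_mul_pow_lt_geometric (m i : ℕ) {y : ℝ} (hy0 : 0 < y) (hy : y ≤ 1 / 4) :
    t (i + (m + 1)) * π ^ (2 * (i + (m + 1))) * y ^ (i + (m + 1))
      < π ^ (2 * m + 2) * y ^ (m + 1) / (2 * m + 2)!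
        * (π ^ 2 / 4 / ((2 * (m : ℝ) + 4) * (2 * (m : ℝ) + 3))) ^ i := by
  set z := π ^ 2 * y
  set q := π ^ 2 / 4 / ((2 * (m : ℝ) + 4) * (2 * (m : ℝ) + 3))
  have hratio : z / ((2 * (m + 1 : ℕ) + 1) * (2 * (m + 1 : ℕ) + 2)) ≤ q := by
    rw [show (2 * ((m + 1 : ℕ) : ℝ) + 1) * (2 * (m + 1 : ℕ) + 2)
      = (2 * (m : ℝ) + 4) * (2 * (m : ℝ) + 3) by push_cast; ring]
    exact div_le_div_of_nonneg_right (by nlinarith [pi_pos]) (by positivity)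
  calc _ < z ^ (m + 1 + i) / (2 * (m + 1 + i))! := by
        rw [add_comm (m + 1) i]
        exact t_mul_pow_lt (by omega) hy0
    _ ≤ z ^ (m + 1) / (2 * (m + 1))! * (z / ((2 * (m + 1 : ℕ) + 1) * (2 * (m + 1 : ℕ) + 2))) ^ i :=
        pow_div_factorial_two_mul_add_le (by positivity) _ _
    _ ≤ z ^ (m + 1) / (2 * (m + 1))! * q ^ i := by gcongr
    _ = _ := by rw [mul_pow, ← pow_mul, mul_add 2 m 1]

theorem sin_sub_Q_bound_general (m : ℕ) (x : ℝ) (hx1 : 0 < x) (hx2 : x < 1) :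
    0 < Real.sin (π * x) - Q m x ∧
    Real.sin (π * x) - Q m x <
      π ^ (2 * m + 2) * (x * (1 - x)) ^ (m + 1) / (Nat.factorial (2 * m + 2)) *
        (1 / (1 - π ^ 2 / 4 / ((2 * (m : ℝ) + 4) * (2 * (m : ℝ) + 3)))) := by
  have hy0 : 0 < x * (1 - x) := mul_pos hx1 (sub_pos.2 hx2)
  have hy : x * (1 - x) ≤ 1 / 4 := by nlinarith [sq_nonneg (x - 1 / 2)]
  have hq1 : π ^ 2 / 4 / ((2 * (m : ℝ) + 4) * (2 * (m : ℝ) + 3)) < 1 := by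
    rw [div_lt_one (by positivity)]
    nlinarith [pi_lt_d2, pi_pos, (m.cast_nonneg : (0 : ℝ) ≤ m)]
  have htail := hasSum_sin_pi_mul_sub_Q m x
  have hpos (i : ℕ) := t_mul_pow_pos (j := i + (m + 1)) (by omega) hy0
  have hlt (i : ℕ) := t_mul_pow_lt_geometric m i hy0 hy
  refine ⟨hasSum_lt (fun i => (hpos i).le) (hpos 0) hasSum_zero htail, ?_⟩
  rw [one_div]
  exact hasSum_lt (fun i => (hlt i).le) (hlt 0) htail
    ((hasSum_geometric_of_lt_one (by positivity) hq1).mul_left _)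

/-- For `m ≥ 1` and `0 < x < 1`,
`0 < sin(πx) − Q_m(x) < π^{2m+2}(x(1−x))^{m+1}/(2m+2)! · 1/(1−q_m)`,
where `q_m = (π²/4)/((2m+4)(2m+3))`. -/
theorem sin_sub_Q_bound (m : ℕ) (hm : 1 ≤ m) (x : ℝ) (hx1 : 0 < x) (hx2 : x < 1) :
    0 < Real.sin (π * x) - Q m x ∧
    Real.sin (π * x) - Q m x <
      π ^ (2 * m + 2) * (x * (1 - x)) ^ (m + 1) / (Nat.factorial (2 * m + 2)) *
        (1 / (1 - π ^ 2 / 4 / ((2 * (m : ℝ) + 4) * (2 * (m : ℝ) + 3)))) :=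
  sin_sub_Q_bound_general m x hx1 hx2
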